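/- arXiv:2310.16344 — 8 statements merged into one kernel-verified Lean document; each statement's English description precedes it below -/
import Mathlib

section
/- In the (κ,ρ)-hypercube partition system, if a subcollection I ⊆ [ρ] × [κ] contains at most κ − 1 pairs (x,y) for every fixed x ∈ [ρ], then the union of the corresponding sets P_{x,y} is a proper subset of M. -/
/-- if a subcollection `I` of the `(κ,ρ)`-hypercube partition
system contains at most `κ - 1` pairs `(x,y)` for each fixed `x`, then the union
of the corresponding sets `P_{x,y}` is a proper subset of the universe `M`. -/
theorem hypercube_partial_rows_not_cover (κ ρ : ℕ) (hκ : 1 ≤ κ) (hρ : 1 ≤ ρ)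
    (I : Finset (Fin ρ × Fin κ))
    (hI : ∀ x : Fin ρ, (I.filter (fun p => p.1 = x)).card ≤ κ - 1) :
    (⋃ p ∈ I, {z : Fin ρ → Fin κ | z p.1 = p.2}) ⊂ Set.univ := by
  rw [Set.ssubset_univ_iff, Set.ne_univ_iff_exists_notMem]
  have hx : ∀ x : Fin ρ, ∃ y : Fin κ,
      y ∉ (I.filter (fun p => p.1 = x)).image Prod.snd := by
    intro x
    have hcard : ((I.filter (fun p => p.1 = x)).image Prod.snd).card < κ := by
      calc ((I.filter (fun p => p.1 = x)).image Prod.snd).card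
          ≤ (I.filter (fun p => p.1 = x)).card := Finset.card_image_le
        _ ≤ κ - 1 := hI x
        _ < κ := Nat.sub_lt hκ one_pos
    by_contra h
    push_neg at h
    have : (Finset.univ : Finset (Fin κ)) ⊆ (I.filter (fun p => p.1 = x)).image Prod.snd :=
      fun y _ => h y
    have := Finset.card_le_card this
    simp at this
    omega
  choose z hz using hx
  refine ⟨z, ?_⟩
  simp only [Set.mem_iUnion, Set.mem_setOf_eq, not_exists]
  rintro ⟨x, y⟩ hmem hzy
  exact hz x (Finset.mem_image.mpr ⟨(x, y), Finset.mem_filter.mpr ⟨hmem, rfl⟩, hzy.symm⟩)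
end

section
/- Let Π be a 2CSP instance on variable set X, and let a ≤ b ≤ t ≤ |X|. If the t-wise direct product Π^⊙t admits an r-list satisfying multi-assignment, then the (a,b)-bipartite direct product instance Π^⊙(a,b) admits an r-list satisfying multi-assignment. -/
/-- A 2CSP instance: variables `X`, value universe `V`, per-variable domains,
and binary constraints on pairs of distinct variables. -/
structure CSP (X V : Type) where
  dom : X → Set V
  cons : Set ((X × X) × Set (V × V))
  distinct : ∀ c ∈ cons, c.1.1 ≠ c.1.2

/-- An assignment satisfies the instance. -/
def CSP.Satisfies {X V : Type} (P : CSP X V) (σ : X → V) : Prop :=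
  (∀ x, σ x ∈ P.dom x) ∧ ∀ c ∈ P.cons, (σ c.1.1, σ c.1.2) ∈ c.2

/-- A partial assignment (represented as a total function whose values only
matter on `S`) satisfies all constraints induced within `S`. -/
def CSP.PartialSat {X V : Type} (P : CSP X V) (S : Finset X) (σ : X → V) : Prop :=
  (∀ x ∈ S, σ x ∈ P.dom x) ∧
  ∀ c ∈ P.cons, c.1.1 ∈ S → c.1.2 ∈ S → (σ c.1.1, σ c.1.2) ∈ c.2

/-- if the `t`-wise direct product admits an `r`-list satisfying
multi-assignment, then so does the `(a,b)`-bipartite direct product instance. -/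
theorem product_to_bipartite {X V : Type} [Fintype X] [DecidableEq X]
    (P : CSP X V) (r a b t : ℕ) (hr : 1 ≤ r) (ha : 1 ≤ a) (hab : a ≤ b) (hbt : b ≤ t)
    (htX : t ≤ Fintype.card X)
    (L : Finset X → Set (X → V))
    (hL : ∀ S : Finset X, S.card = t →
      (L S).Finite ∧ (L S).Nonempty ∧ (L S).ncard ≤ r ∧ ∀ σ ∈ L S, P.PartialSat S σ)
    (hcons : ∀ S T : Finset X, S.card = t → T.card = t →
      ∃ σ ∈ L S, ∃ τ ∈ L T, ∀ x ∈ S ∩ T, σ x = τ x) :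
    ∃ u v : Finset X → Set (X → V),
      (∀ S : Finset X, S.card = a →
        (u S).Finite ∧ (u S).Nonempty ∧ (u S).ncard ≤ r ∧ ∀ σ ∈ u S, P.PartialSat S σ) ∧
      (∀ T : Finset X, T.card = b →
        (v T).Finite ∧ (v T).Nonempty ∧ (v T).ncard ≤ r ∧ ∀ σ ∈ v T, P.PartialSat T σ) ∧
      (∀ S T : Finset X, S.card = a → T.card = b →
        ∃ σ ∈ u S, ∃ τ ∈ v T, ∀ x ∈ S ∩ T, σ x = τ x) := by
  classical
  have hext : ∀ S : Finset X, S.card ≤ t → ∃ E : Finset X, S ⊆ E ∧ E.card = t := by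
    intro S hS
    exact Finset.exists_superset_card_eq hS htX
  choose ext hsub hcard using hext
  refine ⟨fun S => if h : S.card ≤ t then L (ext S h) else ∅,
          fun T => if h : T.card ≤ t then L (ext T h) else ∅, ?_, ?_, ?_⟩
  · intro S hS
    have h : S.card ≤ t := by omega
    simp only [dif_pos h]
    obtain ⟨h1, h2, h3, h4⟩ := hL _ (hcard S h)
    refine ⟨h1, h2, h3, fun σ hσ => ?_⟩
    obtain ⟨hd, hc⟩ := h4 σ hσ
    exact ⟨fun x hx => hd x (hsub S h hx),
      fun c hc' h1' h2' => hc c hc' (hsub S h h1') (hsub S h h2')⟩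
  · intro T hT
    have h : T.card ≤ t := by omega
    simp only [dif_pos h]
    obtain ⟨h1, h2, h3, h4⟩ := hL _ (hcard T h)
    refine ⟨h1, h2, h3, fun σ hσ => ?_⟩
    obtain ⟨hd, hc⟩ := h4 σ hσ
    exact ⟨fun x hx => hd x (hsub T h hx),
      fun c hc' h1' h2' => hc c hc' (hsub T h h1') (hsub T h h2')⟩
  · intro S T hS hT
    have h1 : S.card ≤ t := by omega
    have h2 : T.card ≤ t := by omega
    simp only [dif_pos h1, dif_pos h2]
    obtain ⟨σ, hσ, τ, hτ, hag⟩ := hcons _ _ (hcard S h1) (hcard T h2)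
    refine ⟨σ, hσ, τ, hτ, fun x hx => ?_⟩
    simp only [Finset.mem_inter] at hx
    exact hag x (Finset.mem_inter.mpr ⟨hsub S h1 hx.1, hsub T h2 hx.2⟩)
end

section
/- (Lemma 2 of the paper.) Let k, r, q, a, b, b' be positive integers with a ≥ k and b ≥ r·b' + a, and let X be a finite set with |X| ≥ b + r·b' (large enough). Let u assign to each a-subset S of X a set u(S) of at most r partial assignments on S, and let v assign to each b-subset T a set v(T) of at most q partial assignments on T. Suppose for all S ∈ C(X,a) and T ∈ C(X,b) with S ⊆ T, some element of v(T) restricts on S to an element of u(S). Then for every A ∈ C(X,k) there exists an assignment f_A on A such that for every T' ∈ C(X,b') there exists T ∈ C(X,b) with T ⊇ T' ∪ A and some element of v(T) restricting to f_A on A. -/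
/-- Lemma 2: given consistency of an `r`-sized multi-assignment
`u` on `a`-subsets with a `q`-sized multi-assignment `v` on `b`-subsets along
inclusions, every `k`-subset `A` has an assignment `f_A` such that every
`b'`-subset `T'` extends to some `b`-subset `T ⊇ T' ∪ A` with an element of
`v T` restricting to `f_A` on `A`. -/
theorem lemma2 {X V : Type} [Fintype X] [DecidableEq X]
    (k r q a b b' : ℕ) (hk : 1 ≤ k) (hr : 1 ≤ r) (hq : 1 ≤ q)
    (hb' : 1 ≤ b') (hak : k ≤ a) (hb : r * b' + a ≤ b)
    (hX : r * b' + a + b ≤ Fintype.card X)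
    (u : Finset X → Set (X → V))
    (hu : ∀ S : Finset X, S.card = a → (u S).Finite ∧ (u S).ncard ≤ r)
    (v : Finset X → Set (X → V))
    (hv : ∀ T : Finset X, T.card = b → (v T).Finite ∧ (v T).ncard ≤ q)
    (hcons : ∀ S T : Finset X, S.card = a → T.card = b → S ⊆ T →
      ∃ τ ∈ v T, ∃ σ ∈ u S, ∀ x ∈ S, τ x = σ x) :
    ∀ A : Finset X, A.card = k →
      ∃ f : X → V, ∀ T' : Finset X, T'.card = b' →
        ∃ T : Finset X, T.card = b ∧ T' ∪ A ⊆ T ∧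
          ∃ τ ∈ v T, ∀ x ∈ A, τ x = f x := by
  intro A hA
  -- extend A to a set S of cardinality a
  obtain ⟨S, hAS, hS⟩ : ∃ S : Finset X, A ⊆ S ∧ S.card = a := by
    apply Finset.exists_superset_card_eq (by omega : A.card ≤ a) (by omega)
  by_contra h
  push_neg at h
  choose T' hT'card hT'bad using h
  -- the finite set of candidate assignments on S
  have huS := hu S hS
  set U : Finset (X → V) := huS.1.toFinset with hU
  have hUcard : U.card ≤ r := by
    rw [hU, ← Set.ncard_eq_toFinset_card (u S) huS.1]
    exact huS.2
  -- pack S together with all the bad sets T' σ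
  set F : Finset X := S ∪ U.biUnion T' with hF
  have hFcard : F.card ≤ a + r * b' := by
    calc F.card ≤ S.card + (U.biUnion T').card := Finset.card_union_le _ _
    _ ≤ a + ∑ σ ∈ U, (T' σ).card := by
        gcongr
        · exact hS.le
        · exact Finset.card_biUnion_le
    _ ≤ a + ∑ σ ∈ U, b' := by
        gcongr with σ hσ
        exact (hT'card σ).le
    _ = a + U.card * b' := by rw [Finset.sum_const, smul_eq_mul]
    _ ≤ a + r * b' := by gcongr
  obtain ⟨T, hFT, hT⟩ : ∃ T : Finset X, F ⊆ T ∧ T.card = b :=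
    Finset.exists_superset_card_eq (by omega) (by omega)
  obtain ⟨τ, hτ, σ, hσ, hagree⟩ := hcons S T hS hT
    ((Finset.subset_union_left).trans hFT)
  have hσU : σ ∈ U := by simpa [hU] using hσ
  have hT'sub : T' σ ∪ A ⊆ T := by
    apply Finset.union_subset
    · exact (Finset.subset_biUnion_of_mem T' hσU).trans
        ((Finset.subset_union_right).trans hFT)
    · exact hAS.trans ((Finset.subset_union_left).trans hFT)
  obtain ⟨x, hxA, hxne⟩ := hT'bad σ T hT hT'sub τ hτ
  exact hxne (hagree x (hAS hxA))
end

section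
/- (Lemma 3 of the paper.) For every integer r ≥ 1, set a = r and b = (2r)^r. Let Π = (X, Σ, Φ) be a 2CSP instance with |X| sufficiently large. Let u assign to each a-subset S of X a nonempty set u(S) of at most r partial assignments on S, and let v assign to each b-subset T a single partial satisfying assignment v(T) on T. Suppose that for all S ∈ C(X,a) and T ∈ C(X,b) with S ⊆ T, v(T)|_S ∈ u(S). Then Π has a globally satisfying assignment. -/
/-!
Call an assignment `τ` of `W` `s`-alive if for every set `U` of at most `s` further variables
some `b`-set `T ⊇ W ∪ U` has `v T = τ` on `W`. Consistency with `u` allows at most `r` pairwise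
different restrictions of the `v T` to any `Y` with `|Y| ≥ r`: `r + 1` of them are already
separated by `r` variables of `Y`, which lie in an `r`-set `S`, and they restrict to distinct
elements of `u S`. Consequently an `s`-alive `ρ` on `Y` has an `s'`-alive extension to `W ⊇ Y`
as soon as `|W \ Y| + r s' ≤ s`: otherwise each of the at most `r` realized restrictions to `W`
extending `ρ` is excluded by some set of `s'` variables, and `ρ` is realized by a `b`-set
containing all of them together with `W \ Y`.

Start with one alive assignment on `r` variables. If every alive assignment in the current family
has a unique alive extension to one more variable `x`, reading off the value at `x` of that
extension gives a satisfying assignment, because a constraint on `x, y` is checked inside one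
`b`-set realizing an alive extension to both. Otherwise the family grows by one while the scale
drops from `r s + 2` to `s`. As the family never exceeds `r`, this stops after `r` rounds, and
the scales fit into `b = (2r)^r`.
-/

open Finset Set

def DiffersOn {α β : Type*} (s : Set α) (f g : α → β) : Prop := ¬EqOn f g s

instance {α β : Type*} (s : Set α) : Std.Symm (DiffersOn (β := β) s) :=
  ⟨fun _ _ h h' => h h'.symm⟩

theorem DiffersOn.mono {α β : Type*} {s t : Set α} {f g : α → β} (hst : s ⊆ t)
    (h : DiffersOn s f g) : DiffersOn t f g :=
  fun h' => h (h'.mono hst)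

theorem exists_small_separating_subset {α β : Type*} [DecidableEq α] (F : Finset (α → β))
    (Y : Finset α) (hF : (F : Set (α → β)).Pairwise (DiffersOn Y)) :
    ∃ D ⊆ Y, #D ≤ #F - 1 ∧ (F : Set (α → β)).Pairwise (DiffersOn D) := by
  classical
  induction F using Finset.induction_on with
  | empty => exact ⟨∅, Finset.empty_subset _, by simp, by simp⟩
  | @insert f F hfF ih =>
    rw [coe_insert, pairwise_insert_of_symm_of_notMem hfF] at hF
    obtain ⟨D, hDY, hD, hFD⟩ := ih hF.1
    simp only [card_insert_of_notMem hfF, Nat.add_sub_cancel, coe_insert,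
      pairwise_insert_of_symm_of_notMem hfF]
    by_cases hcoll : ∃ g ∈ F, EqOn f g D
    · obtain ⟨g, hgF, hfgD⟩ := hcoll
      obtain ⟨x, hxY, hfgx⟩ : ∃ x ∈ (Y : Set α), f x ≠ g x := by
        by_contra! h
        exact hF.2 g hgF h
      have hF₀ : 0 < #F := card_pos.2 ⟨g, hgF⟩
      refine ⟨insert x D, insert_subset hxY hDY, (card_insert_le x D).trans (by omega),
        hFD.mono' fun _ _ => DiffersOn.mono (by simp), fun h hhF hfh => ?_⟩
      by_cases hhg : h = g
      · exact hfgx (hhg ▸ hfh (by simp))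
      · exact hFD hgF hhF (Ne.symm hhg) (hfgD.symm.trans (hfh.mono (by simp)))
    · push Not at hcoll
      exact ⟨D, hDY, hD.trans (Nat.sub_le _ _), hFD, hcoll⟩

section Realizations

variable {X V : Type} (v : Finset X → X → V) (b : ℕ)

def Realized (W : Finset X) (τ : X → V) : Prop :=
  ∃ T : Finset X, #T = b ∧ W ⊆ T ∧ EqOn (v T) τ W

def Alive (W : Finset X) (τ : X → V) (s : ℕ) : Prop :=
  ∀ U : Finset X, #U ≤ s → ∃ T : Finset X, #T = b ∧ W ⊆ T ∧ U ⊆ T ∧ EqOn (v T) τ W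

def FewRealizations (r : ℕ) : Prop :=
  ∀ Y : Finset X, r ≤ #Y → ∀ F : Finset (X → V),
    (F : Set (X → V)).Pairwise (DiffersOn Y) → (∀ f ∈ F, Realized v b Y f) → #F ≤ r

variable {v b}

theorem Alive.mono {W W' : Finset X} {τ : X → V} {s : ℕ} (hW : W' ⊆ W)
    (h : Alive v b W τ s) : Alive v b W' τ s := fun U hU =>
  let ⟨T, hT, hWT, hUT, hτ⟩ := h U hU
  ⟨T, hT, hW.trans hWT, hUT, hτ.mono (by simpa)⟩

theorem Alive.realized {W : Finset X} {τ : X → V} {s : ℕ} (h : Alive v b W τ s) :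
    Realized v b W τ :=
  let ⟨T, hT, hWT, _, hτ⟩ := h ∅ (by simp)
  ⟨T, hT, hWT, hτ⟩

theorem Realized.alive_zero {W : Finset X} {τ : X → V} (h : Realized v b W τ) :
    Alive v b W τ 0 := fun U hU =>
  let ⟨T, hT, hWT, hτ⟩ := h
  ⟨T, hT, hWT, by simp [card_eq_zero.1 (Nat.le_zero.1 hU)], hτ⟩

theorem alive_empty [Fintype X] {τ : X → V} {s : ℕ} (hs : s ≤ b)
    (hb : b ≤ Fintype.card X) : Alive v b ∅ τ s := fun U hU =>
  let ⟨T, hUT, hT⟩ := exists_superset_card_eq (hU.trans hs) hb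
  ⟨T, hT, Finset.empty_subset T, hUT, by simp⟩

theorem fewRealizations_of_consistent [DecidableEq X] {r : ℕ} {u : Finset X → Set (X → V)}
    (hu : ∀ S : Finset X, #S = r → (u S).Finite ∧ (u S).ncard ≤ r)
    (hcons : ∀ S T : Finset X, #S = r → #T = b → S ⊆ T →
      ∃ σ ∈ u S, ∀ x ∈ S, v T x = σ x) :
    FewRealizations v b r := by
  intro Y hY F hF hreal
  by_contra! hr
  obtain ⟨F', hF'F, hF'⟩ := exists_subset_card_eq hr
  obtain ⟨D, hDY, hD, hF'D⟩ :=
    exists_small_separating_subset F' Y (hF.mono (by simpa using hF'F))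
  obtain ⟨S, hDS, hSY, hS⟩ := exists_subsuperset_card_eq hDY (by omega) hY
  have hrep : ∀ f ∈ F', ∃ σ ∈ u S, EqOn σ f S := by
    intro f hf
    obtain ⟨T, hT, hYT, hTf⟩ := hreal f (hF'F hf)
    obtain ⟨σ, hσ, hTσ⟩ := hcons S T hS hT (hSY.trans hYT)
    exact ⟨σ, hσ, fun x hx => (hTσ x hx).symm.trans (hTf (hSY hx))⟩
  choose! φ hφu hφ using hrep
  have hinj : InjOn φ F' := fun f hf g hg hfg => by
    by_contra hne
    exact hF'D hf hg hne (((hφ f hf).symm.trans (hfg ▸ hφ g hg)).mono (by simpa))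
  have : r + 1 ≤ r :=
    calc r + 1 = (F' : Set (X → V)).ncard := by rw [ncard_coe_finset, hF']
      _ ≤ (u S).ncard := ncard_le_ncard_of_injOn φ hφu hinj (hu S hS).1
      _ ≤ r := (hu S hS).2
  omega

theorem FewRealizations.exists_cover {r : ℕ} (hR : FewRealizations v b r) {W : Finset X}
    (hW : r ≤ #W) :
    ∃ F : Finset (X → V), #F ≤ r ∧ ∀ g, Realized v b W g → ∃ f ∈ F, EqOn g f W := by
  classical
  by_contra! hno
  have hgrow : ∀ k ≤ r + 1, ∃ F : Finset (X → V), #F = k ∧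
      (F : Set (X → V)).Pairwise (DiffersOn W) ∧ ∀ f ∈ F, Realized v b W f := by
    intro k
    induction k with
    | zero => exact fun _ => ⟨∅, rfl, by simp, by simp⟩
    | succ k ih =>
      intro hk
      obtain ⟨F, hFk, hF, hFreal⟩ := ih (by omega)
      obtain ⟨g, hg, hgF⟩ := hno F (by omega)
      have hgF' : g ∉ F := fun h => hgF g h (eqOn_refl _ _)
      refine ⟨insert g F, by rw [card_insert_of_notMem hgF', hFk], ?_, ?_⟩
      · rw [coe_insert, pairwise_insert_of_symm_of_notMem hgF']
        exact ⟨hF, hgF⟩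
      · simpa [hg] using hFreal
  obtain ⟨F, hFr, hF, hFreal⟩ := hgrow (r + 1) le_rfl
  have := hR W hW F hF hFreal
  omega

theorem FewRealizations.eqOn_of_one (hR : FewRealizations v b 1) {W : Finset X}
    (hW : W.Nonempty) {τ₁ τ₂ : X → V} (h₁ : Realized v b W τ₁) (h₂ : Realized v b W τ₂) :
    EqOn τ₁ τ₂ W := by
  classical
  by_contra hne
  have hτ : τ₁ ≠ τ₂ := fun h => hne (h ▸ eqOn_refl _ _)
  have := hR W (card_pos.2 hW) {τ₁, τ₂}
    (by simpa [pairwise_insert_of_symm_of_notMem, hτ, DiffersOn] using hne)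
    (by simp [h₁, h₂])
  simp [card_pair hτ] at this

theorem Alive.exists_extension [DecidableEq X] {r : ℕ} (hR : FewRealizations v b r)
    {Y W : Finset X} {ρ : X → V} {s s' : ℕ} (hρ : Alive v b Y ρ s) (hYW : Y ⊆ W)
    (hW : r ≤ #W) (hs : #(W \ Y) + r * s' ≤ s) :
    ∃ τ, EqOn τ ρ Y ∧ Alive v b W τ s' := by
  obtain ⟨F, hFr, hcover⟩ := hR.exists_cover hW
  by_contra! hdead
  have hblock : ∀ f, ∃ U : Finset X, #U ≤ s' ∧ (EqOn f ρ Y →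
      ∀ T : Finset X, #T = b → W ⊆ T → U ⊆ T → ¬EqOn (v T) f W) := by
    intro f
    by_cases hf : EqOn f ρ Y
    · simpa [Alive, hf] using hdead f hf
    · exact ⟨∅, by simp, fun h => absurd h hf⟩
  choose U hUs hU using hblock
  have hcard : #((W \ Y) ∪ F.biUnion U) ≤ s :=
    calc #((W \ Y) ∪ F.biUnion U) ≤ #(W \ Y) + #F * s' :=
          (Finset.card_union_le _ _).trans (Nat.add_le_add_left
            (card_biUnion_le_card_mul _ _ _ fun f _ => hUs f) _)
      _ ≤ s := le_trans (Nat.add_le_add_left (Nat.mul_le_mul_right _ hFr) _) hs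
  obtain ⟨T, hT, hYT, hUT, hTρ⟩ := hρ _ hcard
  have hWT : W ⊆ T := fun x hx =>
    if hxY : x ∈ Y then hYT hxY else hUT (mem_union_left _ (mem_sdiff.2 ⟨hx, hxY⟩))
  obtain ⟨f, hf, hTf⟩ := hcover (v T) ⟨T, hT, hWT, eqOn_refl _ _⟩
  have hfρ : EqOn f ρ Y := fun x hx => (hTf (hYW hx)).symm.trans (hTρ hx)
  have hUfT : U f ⊆ T := ((subset_biUnion_of_mem U hf).trans subset_union_right).trans hUT
  exact hU f hfρ T hT hWT hUfT hTf

theorem exists_larger_alive_family [DecidableEq X] {r : ℕ} (hR : FewRealizations v b r)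
    {Y W : Finset X} {L : Finset (X → V)} {s s' : ℕ} (hYW : Y ⊆ W) (hW : r ≤ #W)
    (hs : #(W \ Y) + r * s' ≤ s) (hL : (L : Set (X → V)).Pairwise (DiffersOn Y))
    (hLalive : ∀ f ∈ L, Alive v b Y f s) {ρ τ₁ τ₂ : X → V} (hρ : ρ ∈ L)
    (h₁ : EqOn τ₁ ρ Y) (h₂ : EqOn τ₂ ρ Y) (ha₁ : Alive v b W τ₁ s')
    (ha₂ : Alive v b W τ₂ s') (h₁₂ : ¬EqOn τ₁ τ₂ W) :
    ∃ L' : Finset (X → V), #L' = #L + 1 ∧ (L' : Set (X → V)).Pairwise (DiffersOn W) ∧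
      ∀ f ∈ L', Alive v b W f s' := by
  classical
  have hext : ∀ f ∈ L, ∃ τ, EqOn τ f Y ∧ Alive v b W τ s' := fun f hf =>
    (hLalive f hf).exists_extension hR hYW hW hs
  choose! φ hφY hφ using hext
  -- `τ₁` and `τ₂` cannot both agree with the extension chosen for `ρ`
  obtain ⟨τ, hτρ, hτ, hτφ⟩ : ∃ τ, EqOn τ ρ Y ∧ Alive v b W τ s' ∧ ¬EqOn τ (φ ρ) W := by
    by_cases h : EqOn τ₁ (φ ρ) W
    · exact ⟨τ₂, h₂, ha₂, fun h' => h₁₂ (h.trans h'.symm)⟩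
    · exact ⟨τ₁, h₁, ha₁, h⟩
  have hφsep : ∀ f ∈ L, ∀ g ∈ L, f ≠ g → ¬EqOn (φ f) (φ g) W := fun f hf g hg hfg h =>
    hL hf hg hfg ((hφY f hf).symm.trans ((h.mono (by simpa)).trans (hφY g hg)))
  have hτsep : ∀ f ∈ L, ¬EqOn τ (φ f) W := by
    intro f hf h
    by_cases hfρ : f = ρ
    · exact hτφ (hfρ ▸ h)
    · exact hL hρ hf (Ne.symm hfρ)
        (hτρ.symm.trans ((h.mono (by simpa)).trans (hφY f hf)))
  have hτL : τ ∉ L.image φ := by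
    rw [Finset.mem_image]
    rintro ⟨f, hf, hfτ⟩
    exact hτsep f hf (hfτ ▸ eqOn_refl _ _)
  refine ⟨insert τ (L.image φ), ?_, ?_, ?_⟩
  · have hinj : InjOn φ L := fun f hf g hg hfg =>
      not_not.1 fun hne => hφsep f hf g hg hne (hfg ▸ eqOn_refl (φ f) _)
    rw [card_insert_of_notMem hτL, card_image_of_injOn hinj]
  · rw [coe_insert, pairwise_insert_of_symm_of_notMem hτL, coe_image]
    refine ⟨?_, ?_⟩
    · rintro _ ⟨f, hf, rfl⟩ _ ⟨g, hg, rfl⟩ hne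
      exact hφsep f hf g hg fun h => hne (h ▸ rfl)
    · rintro _ ⟨f, hf, rfl⟩
      exact hτsep f hf
  · simp only [Finset.mem_insert, Finset.mem_image]
    rintro _ (rfl | ⟨f, hf, rfl⟩)
    exacts [hτ, hφ f hf]

-- one round adds at most two variables and `r` excluding sets of the next scale
def aliveScale (r : ℕ) : ℕ → ℕ
  | 0 => 0
  | n + 1 => r * aliveScale r n + 2

theorem aliveScale_add_two_le {r : ℕ} (hr : 2 ≤ r) (n : ℕ) :
    aliveScale r n + 2 ≤ 2 * r ^ n := by
  induction n with
  | zero => simp [aliveScale]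
  | succ n ih =>
    have := Nat.mul_le_mul_left r ih
    rw [aliveScale, pow_succ]
    nlinarith

theorem add_mul_aliveScale_le {r : ℕ} (hr : 2 ≤ r) :
    r + r * aliveScale r r ≤ (2 * r) ^ r := by
  have h2r : 2 * r ≤ 2 ^ r := by
    obtain ⟨k, rfl⟩ : ∃ k, r = k + 1 := ⟨r - 1, by omega⟩
    rw [pow_succ]
    have := Nat.lt_two_pow_self (n := k)
    omega
  calc r + r * aliveScale r r ≤ r * (aliveScale r r + 2) := by ring_nf; omega
    _ ≤ r * (2 * r ^ r) := Nat.mul_le_mul_left r (aliveScale_add_two_le hr r)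
    _ = 2 * r * r ^ r := by ring
    _ ≤ 2 ^ r * r ^ r := Nat.mul_le_mul_right _ h2r
    _ = (2 * r) ^ r := (mul_pow 2 r r).symm

theorem card_insert_insert_sdiff_le [DecidableEq X] (x y : X) (Y : Finset X) :
    #(insert x (insert y Y) \ Y) ≤ 2 := by
  rw [card_sdiff_of_subset ((Finset.subset_insert y Y).trans (Finset.subset_insert x _))]
  have := card_insert_le x (insert y Y)
  have := card_insert_le y Y
  omega

theorem CSP.satisfies_of_unique_alive_extensions [DecidableEq X] (P : CSP X V)
    (hv : ∀ T : Finset X, #T = b → P.PartialSat T (v T)) {Y : Finset X} {ρ : X → V} {s : ℕ}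
    (hexists : ∀ W, Y ⊆ W → #(W \ Y) ≤ 2 → ∃ τ, EqOn τ ρ Y ∧ Alive v b W τ s)
    (hunique : ∀ x τ₁ τ₂, EqOn τ₁ ρ Y → EqOn τ₂ ρ Y → Alive v b (insert x Y) τ₁ s →
      Alive v b (insert x Y) τ₂ s → EqOn τ₁ τ₂ ↑(insert x Y)) :
    ∃ σ, P.Satisfies σ := by
  have hext : ∀ x, ∃ τ, EqOn τ ρ Y ∧ Alive v b (insert x Y) τ s := fun x =>
    hexists _ (Finset.subset_insert x Y) (by simpa using card_insert_insert_sdiff_le x x Y)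
  choose F hFρ hF using hext
  have hvalue : ∀ W x τ, insert x Y ⊆ W → EqOn τ ρ Y → Alive v b W τ s → τ x = F x x :=
    fun W x τ hxW hτρ hτ => hunique x τ (F x) hτρ (hFρ x) (hτ.mono hxW) (hF x) (by simp)
  refine ⟨fun x => F x x, fun x => ?_, fun ⟨(x, y), R⟩ hc => ?_⟩
  · obtain ⟨T, hT, hxT, hTF⟩ := (hF x).realized
    have hdom := (hv T hT).1 x (hxT (mem_insert_self x Y))
    rwa [hTF (mem_insert_self x Y)] at hdom
  · set W := insert x (insert y Y)
    have hYW : Y ⊆ W := (Finset.subset_insert y Y).trans (Finset.subset_insert x _)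
    obtain ⟨τ, hτρ, hτ⟩ := hexists W hYW (card_insert_insert_sdiff_le x y Y)
    obtain ⟨T, hT, hWT, hTτ⟩ := hτ.realized
    have hx : v T x = F x x := (hTτ (by simp [W])).trans
      (hvalue W x τ (insert_subset_insert x (Finset.subset_insert y Y)) hτρ hτ)
    have hy : v T y = F y y := (hTτ (by simp [W])).trans
      (hvalue W y τ (insert_subset (by simp [W]) hYW) hτρ hτ)
    simpa only [hx, hy] using (hv T hT).2 _ hc (hWT (by simp [W])) (hWT (by simp [W]))

theorem CSP.exists_satisfies_of_alive_family [DecidableEq X] (P : CSP X V) {r : ℕ}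
    (hR : FewRealizations v b r) (hv : ∀ T : Finset X, #T = b → P.PartialSat T (v T))
    (n : ℕ) {Y : Finset X} {L : Finset (X → V)} (hY : r ≤ #Y) (hL₀ : L.Nonempty)
    (hLn : r + 1 ≤ #L + n) (hL : (L : Set (X → V)).Pairwise (DiffersOn Y))
    (hLalive : ∀ f ∈ L, Alive v b Y f (aliveScale r n)) :
    ∃ σ, P.Satisfies σ := by
  induction n generalizing Y L with
  | zero =>
    have := hR Y hY L hL fun f hf => (hLalive f hf).realized
    omega
  | succ n ih =>
    obtain ⟨ρ, hρ⟩ := hL₀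
    have hscale : ∀ W, #(W \ Y) ≤ 2 →
        #(W \ Y) + r * aliveScale r n ≤ aliveScale r (n + 1) := fun W hW => by
      rw [aliveScale]; omega
    by_cases hsplit : ∃ x τ₁ τ₂, EqOn τ₁ ρ Y ∧ EqOn τ₂ ρ Y ∧
        Alive v b (insert x Y) τ₁ (aliveScale r n) ∧
        Alive v b (insert x Y) τ₂ (aliveScale r n) ∧ ¬EqOn τ₁ τ₂ ↑(insert x Y)
    · obtain ⟨x, τ₁, τ₂, h₁, h₂, ha₁, ha₂, h₁₂⟩ := hsplit
      have hYx : Y ⊆ insert x Y := Finset.subset_insert x Y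
      have hrx : r ≤ #(insert x Y) := hY.trans (card_le_card hYx)
      obtain ⟨L', hL'card, hL', hL'alive⟩ := exists_larger_alive_family hR hYx hrx
        (hscale _ (by simpa using card_insert_insert_sdiff_le x x Y))
        hL hLalive hρ h₁ h₂ ha₁ ha₂ h₁₂
      exact ih hrx (card_pos.1 (by omega)) (by omega) hL' hL'alive
    · push Not at hsplit
      refine P.satisfies_of_unique_alive_extensions hv (fun W hYW hW => ?_) hsplit
      exact (hLalive ρ hρ).exists_extension hR hYW (hY.trans (card_le_card hYW)) (hscale W hW)

end Realizations

/-- Lemma 3: with `a = r`, `b = (2r)^r`, if an `r`-sized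
multi-assignment `u` on `a`-subsets and a 1-sized assignment `v` on `b`-subsets
(each `v T` a partial satisfying assignment) satisfy `v(T)|_S ∈ u(S)` for all
`S ⊆ T`, then `Π` has a globally satisfying assignment. -/
theorem lemma3 {X V : Type} [Fintype X] [DecidableEq X]
    (P : CSP X V) (r : ℕ) (hr : 1 ≤ r)
    (a b : ℕ) (hadef : a = r) (hbdef : b = (2 * r) ^ r)
    (hX : 2 * b ≤ Fintype.card X)
    (u : Finset X → Set (X → V))
    (hu : ∀ S : Finset X, S.card = a →
      (u S).Finite ∧ (u S).Nonempty ∧ (u S).ncard ≤ r)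
    (v : Finset X → (X → V))
    (hv : ∀ T : Finset X, T.card = b → P.PartialSat T (v T))
    (hcons : ∀ S T : Finset X, S.card = a → T.card = b → S ⊆ T →
      ∃ σ ∈ u S, ∀ x ∈ S, v T x = σ x) :
    ∃ σ : X → V, P.Satisfies σ := by
  subst a
  have hR : FewRealizations v b r :=
    fewRealizations_of_consistent (fun S hS => ⟨(hu S hS).1, (hu S hS).2.2⟩) hcons
  obtain rfl | hr2 : r = 1 ∨ 2 ≤ r := by omega
  · -- `b = 2` leaves no room for the scales, but a realized value of one variable is unique
    have hb : b = 2 := by norm_num [hbdef]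
    refine P.satisfies_of_unique_alive_extensions hv (Y := ∅) (ρ := v ∅) (s := 0)
      (fun W _ hW => ?_) fun x τ₁ τ₂ _ _ h₁ h₂ => hR.eqOn_of_one (by simp) h₁.realized h₂.realized
    rw [Finset.sdiff_empty] at hW
    obtain ⟨T, hWT, hT⟩ := exists_superset_card_eq (s := W) (n := b) (by omega) (by omega)
    exact ⟨v T, by simp, Realized.alive_zero ⟨T, hT, hWT, eqOn_refl _ _⟩⟩
  · have hscale : r + r * aliveScale r r ≤ b := hbdef ▸ add_mul_aliveScale_le hr2
    obtain ⟨S, -, hS⟩ := exists_superset_card_eq (s := (∅ : Finset X)) (n := r) (by simp) (by omega)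
    obtain ⟨ρ, -, hρ⟩ := (alive_empty (τ := v ∅) hscale (by omega)).exists_extension hR
      (s' := aliveScale r r) (Finset.empty_subset S) hS.ge (by simp [hS])
    exact P.exists_satisfies_of_alive_family hR hv r hS.ge (singleton_nonempty ρ) (by simp)
      (by simp) (by simpa using hρ)
end

section
/- (Counterexample, list satisfiability.) Let t ≥ 1 and n ≥ 2t, and let Π be the instance of the previous counterexample on n variables. Define a multi-assignment σ on the t-subsets S of {x_1,...,x_n}: if x_1 ∉ S, σ(S) is the single all-ones assignment on S; if x_1 ∈ S, σ(S) consists of all assignments mapping x_1 to some j ∈ {2,...,2t} with x_j ∉ S and every other variable of S to 1. Then σ list-satisfies Π^⊙t: every element of each σ(S) is a partial satisfying assignment on S, and for every two t-subsets S, T, some pair of assignments from σ(S) and σ(T) agrees on S ∩ T. -/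
/-- The multi-assignment `σ` on `t`-subsets of `{x_1,…,x_n}` from the
counterexample: if `x_1 ∉ S` the single all-ones assignment; if `x_1 ∈ S`, all
assignments mapping `x_1` to some `j ∈ {2,…,2t}` with `x_j ∉ S` and every other
variable to `1`. (Assignments are represented as total functions on indices.) -/
def ceList (t : ℕ) (S : Finset ℕ) : Set (ℕ → ℕ) :=
  if 1 ∈ S then
    {f | ∃ j, 2 ≤ j ∧ j ≤ 2 * t ∧ j ∉ S ∧ f 1 = j ∧ ∀ x, x ≠ 1 → f x = 1}
  else
    {f | ∀ x, f x = 1}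

lemma exists_free (t : ℕ) (ht : 1 ≤ t) (A : Finset ℕ) (h1 : 1 ∈ A)
    (hA : A.card ≤ 2 * t - 1) : ∃ j, 2 ≤ j ∧ j ≤ 2 * t ∧ j ∉ A := by
  have hcard : (A.erase 1).card < (Finset.Icc 2 (2 * t)).card := by
    rw [Finset.card_erase_of_mem h1, Nat.card_Icc]
    omega
  have : ¬ (Finset.Icc 2 (2 * t) ⊆ A.erase 1) := fun h =>
    absurd (Finset.card_le_card h) (not_le.mpr hcard)
  obtain ⟨j, hj1, hj2⟩ := Finset.not_subset.mp this
  rw [Finset.mem_Icc] at hj1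
  refine ⟨j, hj1.1, hj1.2, fun hjA => hj2 ?_⟩
  exact Finset.mem_erase.mpr ⟨by omega, hjA⟩


/-- counterexample, list satisfiability: `ceList` list-satisfies
the `t`-wise direct product of the counterexample instance: each list consists of
partial satisfying assignments (domain constraints and the constraints
`R_i = {(j,1) : j ≠ i}` on `(x_1,x_i)` hold within `S`), and the lists of any two
`t`-subsets contain a pair of assignments agreeing on the intersection. -/
theorem counterexample_list_satisfies (t n : ℕ) (ht : 1 ≤ t) (hn : 2 * t ≤ n) :
    (∀ S ⊆ Finset.Icc 1 n, S.card = t → ∀ f ∈ ceList t S,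
      (1 ∈ S → 2 ≤ f 1 ∧ f 1 ≤ n) ∧
      (∀ i ∈ S, i ≠ 1 → f i = 1) ∧
      (∀ i ∈ S, 1 ∈ S → 2 ≤ i → f 1 ≠ i ∧ f i = 1)) ∧
    (∀ S ⊆ Finset.Icc 1 n, ∀ T ⊆ Finset.Icc 1 n, S.card = t → T.card = t →
      ∃ f ∈ ceList t S, ∃ g ∈ ceList t T, ∀ x ∈ S ∩ T, f x = g x) := by
  constructor
  · intro S hS hcard f hf
    by_cases h1 : 1 ∈ S
    · simp only [ceList, if_pos h1, Set.mem_setOf_eq] at hf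
      obtain ⟨j, hj2, hjt, hjS, hf1, hfx⟩ := hf
      refine ⟨fun _ => ⟨by omega, by omega⟩, fun i _ hi => hfx i hi, ?_⟩
      intro i hiS _ hi2
      exact ⟨fun h => hjS (hf1 ▸ h ▸ hiS), hfx i (by omega)⟩
    · simp only [ceList, if_neg h1, Set.mem_setOf_eq] at hf
      exact ⟨fun h => absurd h h1, fun i _ _ => hf i, fun i _ h => absurd h h1⟩
  · intro S hS T hT hcS hcT
    by_cases h1S : 1 ∈ S <;> by_cases h1T : 1 ∈ T
    · -- both contain 1
      have hU : (S ∪ T).card ≤ 2 * t - 1 := by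
        have := Finset.card_union_add_card_inter S T
        have h1 : 1 ∈ S ∩ T := Finset.mem_inter.mpr ⟨h1S, h1T⟩
        have := Finset.card_pos.mpr ⟨1, h1⟩
        omega
      obtain ⟨j, hj2, hjt, hjU⟩ := exists_free t ht (S ∪ T)
        (Finset.mem_union_left _ h1S) hU
      refine ⟨fun x => if x = 1 then j else 1, ?_, fun x => if x = 1 then j else 1, ?_, fun _ _ => rfl⟩
      · simp only [ceList, if_pos h1S, Set.mem_setOf_eq]
        exact ⟨j, hj2, hjt, fun h => hjU (Finset.mem_union_left _ h), by simp, fun x hx => by simp [hx]⟩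
      · simp only [ceList, if_pos h1T, Set.mem_setOf_eq]
        exact ⟨j, hj2, hjt, fun h => hjU (Finset.mem_union_right _ h), by simp, fun x hx => by simp [hx]⟩
    · obtain ⟨j, hj2, hjt, hjS⟩ := exists_free t ht S h1S (by omega)
      refine ⟨fun x => if x = 1 then j else 1, ?_, fun _ => 1, ?_, ?_⟩
      · simp only [ceList, if_pos h1S, Set.mem_setOf_eq]
        exact ⟨j, hj2, hjt, hjS, by simp, fun x hx => by simp [hx]⟩
      · simp only [ceList, if_neg h1T, Set.mem_setOf_eq]; exact fun _ => trivial
      · intro x hx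
        have : x ≠ 1 := fun h => h1T (h ▸ (Finset.mem_inter.mp hx).2)
        simp [this]
    · obtain ⟨j, hj2, hjt, hjT⟩ := exists_free t ht T h1T (by omega)
      refine ⟨fun _ => 1, ?_, fun x => if x = 1 then j else 1, ?_, ?_⟩
      · simp only [ceList, if_neg h1S, Set.mem_setOf_eq]; exact fun _ => trivial
      · simp only [ceList, if_pos h1T, Set.mem_setOf_eq]
        exact ⟨j, hj2, hjt, hjT, by simp, fun x hx => by simp [hx]⟩
      · intro x hx
        have : x ≠ 1 := fun h => h1S (h ▸ (Finset.mem_inter.mp hx).1)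
        simp [this]
    · refine ⟨fun _ => 1, ?_, fun _ => 1, ?_, fun _ _ => rfl⟩ <;>
        simp only [ceList, if_neg h1S, if_neg h1T, Set.mem_setOf_eq] <;> exact fun _ => trivial
end

section
/- (Counterexample, average list size bound.) In the setting of the previous counterexample with t ≥ 1, n ≥ 2t, the average list size of σ over all t-subsets satisfies (1 / C(n,t)) · Σ_S |σ(S)| ≤ 1 + 2t²/n. In particular, for every ε > 0 there exists n₀ such that for all n ≥ n₀ the average list size is less than 1 + ε. -/
/-- The average list size of `ceList` over all `t`-subsets of `{1,…,n}`. -/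
noncomputable def ceAvg (t n : ℕ) : ℚ :=
  (∑ S ∈ (Finset.Icc 1 n).powersetCard t, ((ceList t S).ncard : ℚ)) / (n.choose t : ℚ)

/-!
If `1 ∉ S` the list of `S` is the single constant map `1`; if `1 ∈ S` each of its maps is
determined by its value at `1`, which lies in `[2, 2t]`. Exactly a fraction `t / n` of the
`t`-subsets of `{1, …, n}` contain `1`, so the average is at most `1 + 2t · t / n`.
-/

open Finset Filter

namespace Finset

theorem card_filter_mem_powersetCard_mul_card {α : Type*} [DecidableEq α] {s : Finset α}
    {a : α} (ha : a ∈ s) (k : ℕ) :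
    #{S ∈ s.powersetCard k | a ∈ S} * #s = k * (#s).choose k := by
  obtain ⟨m, hm⟩ : ∃ m, #s = m + 1 := Nat.exists_eq_add_one.2 (card_pos.2 ⟨a, ha⟩)
  cases k with
  | zero => simp
  | succ k =>
    simp only [← singleton_subset_iff (a := a)]
    rw [card_filter_powersetCard_subset _ _ _ (singleton_subset_iff.2 ha) (by simp), card_singleton,
      hm, Nat.add_sub_cancel, Nat.add_sub_cancel, mul_comm, Nat.add_one_mul_choose_eq, mul_comm]

end Finset

theorem ceList_eq_singleton_of_not_mem {t : ℕ} {S : Finset ℕ} (h : 1 ∉ S) :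
    ceList t S = {fun _ ↦ 1} := by
  ext f
  simp [ceList, h, funext_iff]

theorem ceList_subset_of_mem {t : ℕ} {S : Finset ℕ} (h : 1 ∈ S) :
    ceList t S ⊆ (Function.update (fun _ ↦ 1) 1 ·) '' Set.Icc 2 (2 * t) := by
  rw [ceList, if_pos h]
  rintro f ⟨j, hj2, hjt, -, hf1, hf⟩
  refine ⟨j, ⟨hj2, hjt⟩, funext fun x ↦ ?_⟩
  by_cases hx : x = 1
  · simp [hx, hf1]
  · simp [hx, hf x hx]

theorem ncard_ceList_le (t : ℕ) (S : Finset ℕ) :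
    (ceList t S).ncard ≤ 1 + if 1 ∈ S then 2 * t else 0 := by
  by_cases h : 1 ∈ S
  · rw [if_pos h]
    calc (ceList t S).ncard
        ≤ ((Function.update (fun _ ↦ 1) 1 ·) '' Set.Icc 2 (2 * t)).ncard :=
          Set.ncard_le_ncard (ceList_subset_of_mem h) ((Set.finite_Icc _ _).image _)
      _ ≤ (Set.Icc 2 (2 * t)).ncard := Set.ncard_image_le (Set.finite_Icc _ _)
      _ ≤ 1 + 2 * t := by simp [← Finset.coe_Icc, Set.ncard_coe_finset]; omega
  · simp [ceList_eq_singleton_of_not_mem h]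

theorem sum_ncard_ceList_le (t : ℕ) (P : Finset (Finset ℕ)) :
    ∑ S ∈ P, (ceList t S).ncard ≤ #P + 2 * t * #{S ∈ P | 1 ∈ S} := by
  calc ∑ S ∈ P, (ceList t S).ncard
      ≤ ∑ S ∈ P, (1 + if 1 ∈ S then 2 * t else 0) := sum_le_sum fun S _ ↦ ncard_ceList_le t S
    _ = #P + 2 * t * #{S ∈ P | 1 ∈ S} := by
      rw [sum_add_distrib, ← sum_filter, sum_const, sum_const, smul_eq_mul, smul_eq_mul, mul_one,
        mul_comm]

theorem ceAvg_le {t n : ℕ} (hn : 1 ≤ n) (htn : t ≤ n) :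
    ceAvg t n ≤ 1 + 2 * (t : ℚ) ^ 2 / n := by
  set P := (Icc 1 n).powersetCard t
  have hcard : #(Icc 1 n) = n := by simp
  have hP : (#P : ℚ) = n.choose t := by simp [P, hcard]
  have hsum : (∑ S ∈ P, ((ceList t S).ncard : ℚ)) ≤ #P + 2 * t * #{S ∈ P | 1 ∈ S} := by
    exact_mod_cast sum_ncard_ceList_le t P
  have hmem : (#{S ∈ P | 1 ∈ S} : ℚ) * n = t * n.choose t := by
    exact_mod_cast hcard ▸ card_filter_mem_powersetCard_mul_card (mem_Icc.2 ⟨le_rfl, hn⟩) t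
  have hC : (0 : ℚ) < n.choose t := by exact_mod_cast Nat.choose_pos htn
  have hn' : (0 : ℚ) < n := by exact_mod_cast hn
  rw [ceAvg, div_le_iff₀ hC]
  calc _ ≤ _ := hsum
    _ = (1 + 2 * (t : ℚ) ^ 2 / n) * n.choose t := by
      rw [hP, add_mul, one_mul, div_mul_eq_mul_div, add_right_inj, eq_div_iff hn'.ne']
      linear_combination 2 * (t : ℚ) * hmem

/-- counterexample, average list size: the average list size is at
most `1 + 2t²/n`; in particular it is below `1 + ε` for all large enough `n`. -/
theorem counterexample_average_size (t : ℕ) (ht : 1 ≤ t) :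
    (∀ n : ℕ, 2 * t ≤ n → ceAvg t n ≤ 1 + 2 * (t : ℚ) ^ 2 / n) ∧
    (∀ ε : ℚ, 0 < ε → ∃ n₀ : ℕ, ∀ n : ℕ, n₀ ≤ n → ceAvg t n < 1 + ε) := by
  have hbound : ∀ n : ℕ, 2 * t ≤ n → ceAvg t n ≤ 1 + 2 * (t : ℚ) ^ 2 / n := fun n hn ↦
    ceAvg_le (by omega) (by omega)
  refine ⟨hbound, fun ε hε ↦ eventually_atTop.1 ?_⟩
  have hsmall : ∀ᶠ n : ℕ in atTop, 2 * (t : ℚ) ^ 2 / n < ε :=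
    (tendsto_const_div_atTop_nhds_zero_nat _).eventually (gt_mem_nhds hε)
  filter_upwards [hsmall, eventually_ge_atTop (2 * t)] with n hsmall hn
  linarith [hbound n hn]
end

section
/- (SetCover reduction, completeness.) Let Π = (X, Σ, Φ) be a 2CSP instance with rectangular relations, and construct the set system as in the paper: for each constraint φ_i with underlying maps π_i, σ_i : Σ → C_i, build a (2, |C_i|)-hypercube partition system M^(i) with sets P^(i)_{c,1}, P^(i)_{c,2} for c ∈ C_i; for each (a,b) ∈ R_i add P^(i)_{π_i(a),1} to S_{w_{i,1},a} and P^(i)_{σ_i(b),2} to S_{w_{i,2},b}; the universe U is the disjoint union of all M^(i). If σ : X → Σ is a satisfying assignment of Π, then the |X| sets {S_{x,σ(x)}}_{x∈X} form a partition of U (every element of U is covered exactly once). -/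
/-- Membership of a point `u = ⟨i, z⟩` of the universe `U = ⨆_i [2]^{C_i}` in the
set `S_{x,v}` of the SetCover reduction: `S_{x,v}` receives `P^(i)_{π_i a, 1}`
whenever `x = w_{i,1}`, `v = a` and `(a,b) ∈ R_i` for some `b`, and receives
`P^(i)_{σ_i b, 2}` whenever `x = w_{i,2}`, `v = b` and `(a,b) ∈ R_i` for some `a`.
Here `R_i` is the rectangular relation `{(a,b) : π_i a = σ_i b}`, and
`P^(i)_{c,y} = {z : C_i → Fin 2 | z c = y}`. -/
def inCoverSet {X V ι : Type} (w1 w2 : ι → X) (C : ι → Type)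
    (π s : (i : ι) → V → C i) (x : X) (v : V) (u : Σ i, C i → Fin 2) : Prop :=
  (x = w1 u.1 ∧ (∃ b, π u.1 v = s u.1 b) ∧ u.2 (π u.1 v) = 0) ∨
  (x = w2 u.1 ∧ (∃ a, π u.1 a = s u.1 v) ∧ u.2 (s u.1 v) = 1)

/-- SetCover reduction, completeness: if `σ : X → V` is a
satisfying assignment of the rectangular 2CSP (i.e. `π_i (σ w_{i,1}) = σ_i (σ w_{i,2})`
for every constraint `i`), then the sets `{S_{x,σ x}}_{x ∈ X}` form a partition of
the universe: every element is covered by exactly one of them. -/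
theorem setcover_completeness {X V ι : Type} (w1 w2 : ι → X)
    (hw : ∀ i, w1 i ≠ w2 i) (C : ι → Type) (π s : (i : ι) → V → C i)
    (σ : X → V) (hsat : ∀ i, π i (σ (w1 i)) = s i (σ (w2 i))) :
    ∀ u : Σ i, C i → Fin 2, ∃! x : X, inCoverSet w1 w2 C π s x (σ x) u := by
  rintro ⟨i, z⟩
  -- key value
  have key : π i (σ (w1 i)) = s i (σ (w2 i)) := hsat i
  by_cases h0 : z (π i (σ (w1 i))) = 0
  · refine ⟨w1 i, Or.inl ⟨rfl, ⟨σ (w2 i), key⟩, h0⟩, ?_⟩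
    rintro x (⟨hx, _, hz⟩ | ⟨hx, _, hz⟩)
    · exact hx
    · exfalso
      rw [hx] at hz
      rw [key] at h0
      exact absurd (h0.symm.trans hz) (by decide)
  · have h1 : z (π i (σ (w1 i))) = 1 := by omega
    refine ⟨w2 i, Or.inr ⟨rfl, ⟨σ (w1 i), key⟩, key ▸ h1⟩, ?_⟩
    rintro x (⟨hx, _, hz⟩ | ⟨hx, _, hz⟩)
    · exfalso
      rw [hx] at hz
      exact h0 hz
    · exact hx
end

section
/- (SetCover reduction, soundness.) In the setting of the previous construction, suppose a collection S' ⊆ {S_{x,v} : x ∈ X, v ∈ Σ} covers the universe U. Then the multi-assignment σ defined by σ(x) = {v ∈ Σ : S_{x,v} ∈ S'} list-satisfies Π: for every constraint φ_i there exist a ∈ σ(w_{i,1}) and b ∈ σ(w_{i,2}) with (a,b) ∈ R_i. Consequently, if Π has no multi-assignment of total size ≤ r·|X| that list-satisfies it, then the minimum set cover size exceeds r·|X|. -/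
/-- SetCover reduction, soundness: if a finite collection `S'` of
pairs `(x,v)` covers the universe, then the multi-assignment
`m x = {v : (x,v) ∈ S'}` list-satisfies the 2CSP: every constraint `i` has
`a ∈ m (w_{i,1})`, `b ∈ m (w_{i,2})` with `(a,b) ∈ R_i`. Consequently, if no
multi-assignment of total size at most `r·|X|` list-satisfies the instance, then
every cover uses more than `r·|X|` sets. -/
theorem setcover_soundness {X V ι : Type} [Fintype X] [DecidableEq X] [DecidableEq V]
    (w1 w2 : ι → X) (hw : ∀ i, w1 i ≠ w2 i) (C : ι → Type)
    (π s : (i : ι) → V → C i) (r : ℕ) (S' : Finset (X × V))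
    (hcov : ∀ u : Σ i, C i → Fin 2, ∃ p ∈ S', inCoverSet w1 w2 C π s p.1 p.2 u) :
    (∀ i, ∃ a b, (w1 i, a) ∈ S' ∧ (w2 i, b) ∈ S' ∧ π i a = s i b) ∧
    ((¬ ∃ m : X → Finset V,
        (∑ x, (m x).card) ≤ r * Fintype.card X ∧
        ∀ i, ∃ a ∈ m (w1 i), ∃ b ∈ m (w2 i), π i a = s i b) →
      r * Fintype.card X < S'.card) := by
  classical
  have key : ∀ i, ∃ a b, (w1 i, a) ∈ S' ∧ (w2 i, b) ∈ S' ∧ π i a = s i b := by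
    intro i
    set z : C i → Fin 2 := fun c => if ∃ a, (w1 i, a) ∈ S' ∧ π i a = c then 1 else 0 with hz
    obtain ⟨p, hp, hin⟩ := hcov ⟨i, z⟩
    rcases hin with ⟨hx, _, h0⟩ | ⟨hx, _, h1⟩
    · exfalso
      have : z (π i p.2) = 1 := by
        simp only [hz]
        rw [if_pos ⟨p.2, by rwa [← hx, Prod.mk.eta], rfl⟩]
      have h0' : z (π i p.2) = 0 := h0
      rw [h0'] at this
      exact absurd this (by decide)
    · have : z (s i p.2) = 1 := h1
      simp only [hz] at this
      by_cases h : ∃ a, (w1 i, a) ∈ S' ∧ π i a = s i p.2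
      · obtain ⟨a, ha, hpa⟩ := h
        exact ⟨a, p.2, ha, by rwa [← hx, Prod.mk.eta], hpa⟩
      · rw [if_neg h] at this
        exact absurd this (by decide)
  refine ⟨key, fun hno => ?_⟩
  by_contra hle
  push_neg at hle
  apply hno
  refine ⟨fun x => (S'.filter (fun p => p.1 = x)).image Prod.snd, ?_, ?_⟩
  · calc (∑ x, ((S'.filter (fun p => p.1 = x)).image Prod.snd).card)
        ≤ ∑ x, (S'.filter (fun p => p.1 = x)).card :=
          Finset.sum_le_sum fun x _ => Finset.card_image_le
      _ = S'.card := (Finset.card_eq_sum_card_fiberwise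
          (fun p _ => Finset.mem_univ p.1)).symm
      _ ≤ r * Fintype.card X := hle
  · intro i
    obtain ⟨a, b, ha, hb, hab⟩ := key i
    refine ⟨a, ?_, b, ?_, hab⟩
    · exact Finset.mem_image.2 ⟨(w1 i, a), Finset.mem_filter.2 ⟨ha, rfl⟩, rfl⟩
    · exact Finset.mem_image.2 ⟨(w2 i, b), Finset.mem_filter.2 ⟨hb, rfl⟩, rfl⟩
end
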